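/- For any literals L and L', the weight constraint program { L ← not L' , L' ← not L , ⊥ ← L, L' } and the program consisting of the single weight constraint 1 ≤ {L = 1, L' = 1} ≤ 1 have exactly the same SE-models, and hence are strongly equivalent. -/

import Mathlib

open scoped Classical

inductive Lit where
  | pos : ℕ → Lit
  | neg : ℕ → Lit
deriving DecidableEq

/-- A set of literals is consistent if it contains no complementary pair. -/
def Consistent (X : Set Lit) : Prop :=
  ∀ a : ℕ, ¬ (Lit.pos a ∈ X ∧ Lit.neg a ∈ X)

/-- A rule element: a literal or a literal prefixed with `not`. -/
inductive RElem where
  | pos : Lit → RElem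
  | neg : Lit → RElem
deriving DecidableEq

def SatRE (X : Set Lit) : RElem → Prop
  | RElem.pos l => l ∈ X
  | RElem.neg l => l ∉ X

/-- The literal of a rule element. -/
def reLit : RElem → Lit
  | RElem.pos l => l
  | RElem.neg l => l

/-- A weight constraint L ≤ S ≤ U, where S is a (multi)set of weight assignments
e = w (rule element, weight) and L, U are reals or ±∞. -/
structure WC where
  lb : EReal
  S : Multiset (RElem × ℝ)
  ub : EReal

/-- v(S,X): the sum of the weights of the assignments whose rule element X satisfies. -/
noncomputable def wval (X : Set Lit) (S : Multiset (RElem × ℝ)) : ℝ :=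
  ((S.filter fun p => SatRE X p.1).map Prod.snd).sum

def SatWC (X : Set Lit) (C : WC) : Prop :=
  C.lb ≤ (wval X C.S : EReal) ∧ (wval X C.S : EReal) ≤ C.ub

/-- A WCP rule C0 ← C1,...,Cn. -/
structure WRule where
  head : WC
  body : List WC

abbrev WProg := Set WRule

def isPosRE (p : RElem × ℝ) : Prop := ∃ l : Lit, p.1 = RElem.pos l

/-- In a weight constraint program, heads contain no negative rule elements. -/
def HeadPos (P : WProg) : Prop := ∀ r ∈ P, ∀ p ∈ r.head.S, isPosRE p

def SatWRule (X : Set Lit) (r : WRule) : Prop :=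
  (∀ C ∈ r.body, SatWC X C) → SatWC X r.head

def SatWProg (X : Set Lit) (P : WProg) : Prop := ∀ r ∈ P, SatWRule X r

/-- The reduct (L ≤ S)^X = L − v(S∖S', X) ≤ S', where S' is the positive part of S. -/
noncomputable def RedLS (X : Set Lit) (C : WC) : WC :=
  ⟨C.lb - (wval X (C.S.filter fun p => ¬ isPosRE p) : EReal),
    C.S.filter isPosRE, ⊤⟩

/-- The weight constraint 1 ≤ {l = 1}, representing the literal l. -/
noncomputable def litWC (l : Lit) : WC := ⟨(1 : EReal), {(RElem.pos l, (1 : ℝ))}, ⊤⟩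

/-- The weight constraint 1 ≤ {not l = 1}, representing `not l`. -/
noncomputable def notWC (l : Lit) : WC := ⟨(1 : EReal), {(RElem.neg l, (1 : ℝ))}, ⊤⟩

/-- ⊥, i.e. the weight constraint 1 ≤ {}. -/
noncomputable def botWC : WC := ⟨(1 : EReal), 0, ⊤⟩

/-- The reduct of a WCP rule with respect to X: all rules e ← (L1 ≤ S1)^X,...,(Ln ≤ Sn)^X
for head literals e with X ⊨ e and X ⊨ Si ≤ Ui for all i. -/
noncomputable def WReductRule (X : Set Lit) (r : WRule) : WProg :=
  {r' | ∃ l : Lit, (∃ w : ℝ, (RElem.pos l, w) ∈ r.head.S) ∧ l ∈ X ∧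
    (∀ C ∈ r.body, (wval X C.S : EReal) ≤ C.ub) ∧
    r' = ⟨litWC l, r.body.map (RedLS X)⟩}

noncomputable def WReductProg (X : Set Lit) (P : WProg) : WProg :=
  {r' | ∃ r ∈ P, r' ∈ WReductRule X r}

/-- X is an answer set for P if X ⊨ P and no proper subset of X satisfies P^X. -/
def AnswerSetW (X : Set Lit) (P : WProg) : Prop :=
  Consistent X ∧ SatWProg X P ∧
    ∀ Z : Set Lit, Z ⊂ X → ¬ SatWProg Z (WReductProg X P)

def SEModelW (P : WProg) (X Y : Set Lit) : Prop :=
  Consistent X ∧ Consistent Y ∧ X ⊆ Y ∧ SatWProg Y P ∧ SatWProg X (WReductProg Y P)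

def StrongEqW (P Q : WProg) : Prop :=
  ∀ R : WProg, HeadPos R →
    ∀ Y : Set Lit, AnswerSetW Y (P ∪ R) ↔ AnswerSetW Y (Q ∪ R)

/-- A weight constraint program is ¬-free if classical negation occurs nowhere in it. -/
def WProgNegFree (P : WProg) : Prop :=
  ∀ r ∈ P, (∀ p ∈ r.head.S, ∃ a : ℕ, reLit p.1 = Lit.pos a) ∧
    ∀ C ∈ r.body, ∀ p ∈ C.S, ∃ a : ℕ, reLit p.1 = Lit.pos a

def AtomsOnly (Z : Set Lit) : Prop := ∀ l ∈ Z, ∃ a, l = Lit.pos a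

/-!
A model `Y` of either program contains exactly one of `L`, `L'`. Relative to such a `Y` the
reduct of `not L'` (resp. `not L`) is a constraint that is true in every interpretation, so
both reducts just demand that `X` contain those of `L`, `L'` that lie in `Y`: the SE-models
coincide. Equal SE-models give strong equivalence, since whether `Y` is an answer set of
`P ∪ R` depends on `P` only through its SE-models `(X, Y)` with `X ⊆ Y`.
-/

@[simp] lemma satRE_pos (X : Set Lit) (l : Lit) : SatRE X (RElem.pos l) ↔ l ∈ X := Iff.rfl

@[simp] lemma satRE_neg (X : Set Lit) (l : Lit) : SatRE X (RElem.neg l) ↔ l ∉ X := Iff.rfl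

@[simp] lemma not_isPosRE_neg (l : Lit) (w : ℝ) : ¬ isPosRE (RElem.neg l, w) := by
  rintro ⟨_, ⟨⟩⟩

@[simp] lemma wval_zero (X : Set Lit) : wval X 0 = 0 := rfl

lemma wval_singleton (X : Set Lit) (e : RElem) (w : ℝ) :
    wval X {(e, w)} = if SatRE X e then w else 0 := by
  rw [wval, Multiset.filter_singleton]
  split_ifs <;> simp

lemma wval_pair (X : Set Lit) (e f : RElem) (w v : ℝ) :
    wval X {(e, w), (f, v)} = (if SatRE X e then w else 0) + (if SatRE X f then v else 0) := by
  rw [wval, Multiset.insert_eq_cons, Multiset.filter_cons, Multiset.filter_singleton]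
  split_ifs <;> simp

@[simp] lemma satWC_litWC (X : Set Lit) (l : Lit) : SatWC X (litWC l) ↔ l ∈ X := by
  by_cases h : l ∈ X <;> simp [SatWC, litWC, wval_singleton, h]

@[simp] lemma satWC_notWC (X : Set Lit) (l : Lit) : SatWC X (notWC l) ↔ l ∉ X := by
  by_cases h : l ∈ X <;> simp [SatWC, notWC, wval_singleton, h]

@[simp] lemma not_satWC_botWC (X : Set Lit) : ¬ SatWC X botWC := by
  simp [SatWC, botWC]

@[simp] lemma satWC_redLS_notWC (X Y : Set Lit) (l : Lit) :
    SatWC X (RedLS Y (notWC l)) ↔ l ∉ Y := by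
  by_cases h : l ∈ Y <;>
    simp [SatWC, RedLS, notWC, wval_singleton, Multiset.filter_singleton, h, ← EReal.coe_one]

lemma satWC_one_le_pair_le_one (X : Set Lit) (l l' : Lit) :
    SatWC X ⟨1, {(RElem.pos l, 1), (RElem.pos l', 1)}, 1⟩ ↔ Xor (l ∈ X) (l' ∈ X) := by
  simp only [SatWC, wval_pair, ← EReal.coe_one, EReal.coe_le_coe_iff]
  by_cases h : l ∈ X <;> by_cases h' : l' ∈ X <;> norm_num [h, h', Xor]

lemma satWProg_insert (X : Set Lit) (r : WRule) (P : WProg) :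
    SatWProg X (insert r P) ↔ SatWRule X r ∧ SatWProg X P :=
  Set.forall_mem_insert

lemma satWProg_singleton (X : Set Lit) (r : WRule) : SatWProg X {r} ↔ SatWRule X r := by
  simp [SatWProg]

lemma satWProg_union (X : Set Lit) (P Q : WProg) :
    SatWProg X (P ∪ Q) ↔ SatWProg X P ∧ SatWProg X Q := by
  simp [SatWProg, or_imp, forall_and]

lemma wReductProg_union (Y : Set Lit) (P Q : WProg) :
    WReductProg Y (P ∪ Q) = WReductProg Y P ∪ WReductProg Y Q := by
  ext r'
  simp only [WReductProg, Set.mem_ofPred_eq, Set.mem_union, or_and_right, exists_or]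

lemma satWProg_wReductProg (X Y : Set Lit) (P : WProg) :
    SatWProg X (WReductProg Y P) ↔ ∀ r ∈ P, SatWProg X (WReductRule Y r) :=
  ⟨fun h _ hr r' hr' => h r' ⟨_, hr, hr'⟩, fun h _ ⟨r, hr, hr'⟩ => h r hr _ hr'⟩

lemma satWProg_wReductRule (X Y : Set Lit) (r : WRule) :
    SatWProg X (WReductRule Y r) ↔
      ∀ l : Lit, (∃ w : ℝ, (RElem.pos l, w) ∈ r.head.S) → l ∈ Y →
        (∀ C ∈ r.body, (wval Y C.S : EReal) ≤ C.ub) →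
        SatWRule X ⟨litWC l, r.body.map (RedLS Y)⟩ :=
  ⟨fun h l hl hlY hub => h _ ⟨l, hl, hlY, hub, rfl⟩,
    fun h _ ⟨l, hl, hlY, hub, hr'⟩ => hr' ▸ h l hl hlY hub⟩

lemma satWProg_wReductProg_self (Y : Set Lit) (P : WProg) : SatWProg Y (WReductProg Y P) :=
  fun _ ⟨_, _, l, _, hlY, _, hr'⟩ _ => hr' ▸ (satWC_litWC Y l).2 hlY

lemma satWProg_wReductRule_botWC (X Y : Set Lit) (body : List WC) :
    SatWProg X (WReductRule Y ⟨botWC, body⟩) := by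
  simp [satWProg_wReductRule, botWC]

lemma satWProg_wReductRule_fact (X Y : Set Lit) (H : WC) :
    SatWProg X (WReductRule Y ⟨H, []⟩) ↔
      ∀ l : Lit, (∃ w : ℝ, (RElem.pos l, w) ∈ H.S) → l ∈ Y → l ∈ X := by
  simp [satWProg_wReductRule, SatWRule]

lemma satWProg_wReductRule_litWC_notWC (X Y : Set Lit) (l l' : Lit) :
    SatWProg X (WReductRule Y ⟨litWC l, [notWC l']⟩) ↔ (l ∈ Y → l' ∉ Y → l ∈ X) := by
  simp only [satWProg_wReductRule, List.mem_cons, List.not_mem_nil, or_false, forall_eq,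
    SatWRule, List.map_cons, List.map_nil, satWC_redLS_notWC, satWC_litWC, forall_exists_index]
  simp [litWC, notWC]

lemma Consistent.mono {X Y : Set Lit} (h : X ⊆ Y) (hY : Consistent Y) : Consistent X :=
  fun a ha => hY a (ha.imp (@h _) (@h _))

/-- `(Y, Y)` transfers `Y ⊨ P` to `Y ⊨ Q`, and `(Z, Y)` transfers `Z ⊨ Q^Y` back to `Z ⊨ P^Y`,
so minimality of `Y` carries over. -/
lemma AnswerSetW.of_seModelW_iff {P Q : WProg} (h : ∀ X Y, SEModelW P X Y ↔ SEModelW Q X Y)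
    {R : WProg} {Y : Set Lit} (hY : AnswerSetW Y (P ∪ R)) : AnswerSetW Y (Q ∪ R) := by
  obtain ⟨hcons, hsat, hmin⟩ := hY
  obtain ⟨hP, hR⟩ := (satWProg_union Y P R).1 hsat
  have hQ : SatWProg Y Q :=
    ((h Y Y).1 ⟨hcons, hcons, subset_rfl, hP, satWProg_wReductProg_self Y P⟩).2.2.2.1
  refine ⟨hcons, (satWProg_union Y Q R).2 ⟨hQ, hR⟩, fun Z hZ hZsat => hmin Z hZ ?_⟩
  rw [wReductProg_union, satWProg_union] at hZsat ⊢
  exact ⟨((h Z Y).2 ⟨hcons.mono hZ.subset, hcons, hZ.subset, hQ, hZsat.1⟩).2.2.2.2, hZsat.2⟩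

lemma strongEqW_of_seModelW_iff {P Q : WProg} (h : ∀ X Y, SEModelW P X Y ↔ SEModelW Q X Y) :
    StrongEqW P Q := fun _ _ _ =>
  ⟨AnswerSetW.of_seModelW_iff h, AnswerSetW.of_seModelW_iff fun X Y => (h X Y).symm⟩

noncomputable def exclusiveChoiceProg (L L' : Lit) : WProg :=
  {⟨litWC L, [notWC L']⟩, ⟨litWC L', [notWC L]⟩, ⟨botWC, [litWC L, litWC L']⟩}

noncomputable def cardinalityOneProg (L L' : Lit) : WProg :=
  {⟨⟨1, {(RElem.pos L, 1), (RElem.pos L', 1)}, 1⟩, []⟩}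

lemma satWProg_exclusiveChoiceProg (Y : Set Lit) (L L' : Lit) :
    SatWProg Y (exclusiveChoiceProg L L') ↔ Xor (L ∈ Y) (L' ∈ Y) := by
  simp [exclusiveChoiceProg, satWProg_insert, satWProg_singleton, SatWRule, xor_def]
  tauto

lemma satWProg_cardinalityOneProg (Y : Set Lit) (L L' : Lit) :
    SatWProg Y (cardinalityOneProg L L') ↔ Xor (L ∈ Y) (L' ∈ Y) := by
  rw [cardinalityOneProg, satWProg_singleton, ← satWC_one_le_pair_le_one]
  simp [SatWRule]

lemma satWProg_wReductProg_exclusiveChoiceProg (X Y : Set Lit) (L L' : Lit) :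
    SatWProg X (WReductProg Y (exclusiveChoiceProg L L')) ↔
      (L ∈ Y → L' ∉ Y → L ∈ X) ∧ (L' ∈ Y → L ∉ Y → L' ∈ X) := by
  simp [exclusiveChoiceProg, satWProg_wReductProg, satWProg_wReductRule_litWC_notWC,
    satWProg_wReductRule_botWC]

lemma satWProg_wReductProg_cardinalityOneProg (X Y : Set Lit) (L L' : Lit) :
    SatWProg X (WReductProg Y (cardinalityOneProg L L')) ↔
      (L ∈ Y → L ∈ X) ∧ (L' ∈ Y → L' ∈ X) := by
  simp [cardinalityOneProg, satWProg_wReductProg, satWProg_wReductRule_fact, or_imp, forall_and]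

/-- The two reducts differ only in the premises `L' ∉ Y`, `L ∉ Y`, which hold whenever `Y` is a
model, since then exactly one of `L`, `L'` lies in `Y`. -/
lemma seModelW_exclusiveChoiceProg_iff (L L' : Lit) (X Y : Set Lit) :
    SEModelW (exclusiveChoiceProg L L') X Y ↔ SEModelW (cardinalityOneProg L L') X Y := by
  simp only [SEModelW, satWProg_exclusiveChoiceProg, satWProg_cardinalityOneProg,
    satWProg_wReductProg_exclusiveChoiceProg, satWProg_wReductProg_cardinalityOneProg, xor_def]
  tauto

/-- { L ← not L' , L' ← not L , ⊥ ← L, L' } and { 1 ≤ {L=1, L'=1} ≤ 1 }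
have the same SE-models, hence are strongly equivalent. -/
theorem stmt15 (L L' : Lit) :
    (∀ X Y : Set Lit,
        SEModelW ({⟨litWC L, [notWC L']⟩, ⟨litWC L', [notWC L]⟩,
                   ⟨botWC, [litWC L, litWC L']⟩} : WProg) X Y ↔
        SEModelW ({⟨⟨(1 : EReal), {(RElem.pos L, (1 : ℝ)), (RElem.pos L', (1 : ℝ))},
                     (1 : EReal)⟩, []⟩} : WProg) X Y) ∧
    StrongEqW ({⟨litWC L, [notWC L']⟩, ⟨litWC L', [notWC L]⟩,
                ⟨botWC, [litWC L, litWC L']⟩} : WProg)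
      ({⟨⟨(1 : EReal), {(RElem.pos L, (1 : ℝ)), (RElem.pos L', (1 : ℝ))},
          (1 : EReal)⟩, []⟩} : WProg) :=
  ⟨seModelW_exclusiveChoiceProg_iff L L',
    strongEqW_of_seModelW_iff (seModelW_exclusiveChoiceProg_iff L L')⟩
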